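/- Let τ, σ be related by σ = β·τ·arcosh(1/(βτ)) for a constant β > 0 and τ ∈ (0, 1/β). Regarding τ as a function of σ near σ = 0 (the inverse function), the derivative dτ/dσ tends to 0 as σ → 0⁺. -/

import Mathlib

/-- The inverse hyperbolic cosine, `arcosh x = log (x + sqrt (x² - 1))`. -/
noncomputable def arcosh (x : ℝ) : ℝ := Real.log (x + Real.sqrt (x ^ 2 - 1))

open Real hiding arcosh
open Set Filter

lemma two_lt_log_ten : (2:ℝ) < Real.log 10 := by
  rw [Real.lt_log_iff_exp_lt (by norm_num)]
  have h := Real.exp_one_lt_d9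
  have h2 : Real.exp 2 = Real.exp 1 * Real.exp 1 := by
    rw [← Real.exp_add]; norm_num
  nlinarith [Real.exp_pos 1]

lemma sqrt_big {u : ℝ} (h0 : 0 < u) (h1 : u ≤ 1/10) :
    1/2 < Real.sqrt (1 - u ^ 2) := by
  rw [show (1:ℝ)/2 = Real.sqrt ((1/2)^2) by rw [Real.sqrt_sq]; norm_num]
  apply Real.sqrt_lt_sqrt (by norm_num)
  nlinarith

lemma D_lower {u : ℝ} (h0 : 0 < u) (h1 : u ≤ 1/10) :
    Real.log (1/u) - 2 ≤
      Real.log (1 + Real.sqrt (1 - u ^ 2)) - Real.log u - 1 / Real.sqrt (1 - u ^ 2) := by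
  have hs := sqrt_big h0 h1
  have h2 : 1 / Real.sqrt (1 - u ^ 2) < 2 := by
    rw [div_lt_iff₀ (by linarith)]; linarith
  have h3 : 0 ≤ Real.log (1 + Real.sqrt (1 - u ^ 2)) := Real.log_nonneg (by linarith)
  have h4 : Real.log (1/u) = - Real.log u := by rw [one_div, Real.log_inv]
  linarith

lemma g_lower {u : ℝ} (h0 : 0 < u) (h1 : u ≤ 1/10) :
    2 * u ≤ u * (Real.log (1 + Real.sqrt (1 - u ^ 2)) - Real.log u) := by
  have h3 : 0 ≤ Real.log (1 + Real.sqrt (1 - u ^ 2)) :=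
    Real.log_nonneg (by linarith [Real.sqrt_nonneg (1 - u ^ 2)])
  have h4 : Real.log u ≤ Real.log (1/10) := Real.log_le_log h0 h1
  have h5 : Real.log ((1:ℝ)/10) = - Real.log 10 := by
    rw [one_div, Real.log_inv]
  have := two_lt_log_ten
  nlinarith

lemma g_upper {u : ℝ} (h0 : 0 < u) (h1 : u < 1) :
    u * (Real.log (1 + Real.sqrt (1 - u ^ 2)) - Real.log u) ≤
      u * Real.log 2 - Real.log u * u := by
  have hsle : Real.sqrt (1 - u ^ 2) ≤ 1 := by
    have := Real.sqrt_le_sqrt (show 1 - u ^ 2 ≤ 1 by nlinarith)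
    rwa [Real.sqrt_one] at this
  have h3 : Real.log (1 + Real.sqrt (1 - u ^ 2)) ≤ Real.log 2 :=
    Real.log_le_log (by positivity) (by linarith)
  nlinarith

lemma sqrt_pos_aux {u : ℝ} (h0 : 0 < u) (h1 : u < 1) : 0 < Real.sqrt (1 - u ^ 2) := by
  apply Real.sqrt_pos.mpr; nlinarith

lemma arcosh_eq {u : ℝ} (h0 : 0 < u) (h1 : u < 1) :
    arcosh (1 / u) = Real.log (1 + Real.sqrt (1 - u ^ 2)) - Real.log u := by
  have hs := sqrt_pos_aux h0 h1
  have h2 : (1 / u) ^ 2 - 1 = (1 - u ^ 2) / u ^ 2 := by field_simp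
  rw [arcosh, h2, Real.sqrt_div (by nlinarith), Real.sqrt_sq h0.le]
  rw [show 1 / u + Real.sqrt (1 - u ^ 2) / u = (1 + Real.sqrt (1 - u ^ 2)) / u by ring]
  rw [Real.log_div (by positivity) h0.ne']

lemma hasDerivAt_g {u : ℝ} (h0 : 0 < u) (h1 : u < 1) :
    HasDerivAt (fun x => x * (Real.log (1 + Real.sqrt (1 - x ^ 2)) - Real.log x))
      (Real.log (1 + Real.sqrt (1 - u ^ 2)) - Real.log u - 1 / Real.sqrt (1 - u ^ 2)) u := by
  have hs := sqrt_pos_aux h0 h1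
  have hsq : Real.sqrt (1 - u ^ 2) ^ 2 = 1 - u ^ 2 := Real.sq_sqrt (by nlinarith)
  have h1' : HasDerivAt (fun x : ℝ => 1 - x ^ 2) (-(2 * u)) u := by
    simpa using ((hasDerivAt_pow 2 u).const_sub 1)
  have hsd : HasDerivAt (fun x : ℝ => Real.sqrt (1 - x ^ 2))
      (-(2 * u) / (2 * Real.sqrt (1 - u ^ 2))) u := h1'.sqrt (by nlinarith)
  have hl1 : HasDerivAt (fun x : ℝ => Real.log (1 + Real.sqrt (1 - x ^ 2)))
      ((-(2 * u) / (2 * Real.sqrt (1 - u ^ 2))) / (1 + Real.sqrt (1 - u ^ 2))) u :=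
    ((hsd.const_add 1).log (by positivity))
  have hl2 : HasDerivAt Real.log u⁻¹ u := Real.hasDerivAt_log h0.ne'
  have := (hasDerivAt_id u).mul (hl1.sub hl2)
  refine this.congr_deriv ?_
  have h1s : (1 : ℝ) + Real.sqrt (1 - u ^ 2) ≠ 0 := by positivity
  simp only [Pi.sub_apply, id]
  field_simp
  linear_combination (-1 : ℝ) * hsq

lemma hasDerivAt_f (β : ℝ) (hβ : 0 < β) {τ : ℝ} (h0 : 0 < τ) (h1 : τ < 1 / β) :
    HasDerivAt (fun x => β * x * arcosh (1 / (β * x)))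
      (β * (Real.log (1 + Real.sqrt (1 - (β * τ) ^ 2)) - Real.log (β * τ)
        - 1 / Real.sqrt (1 - (β * τ) ^ 2))) τ := by
  have hu0 : 0 < β * τ := by positivity
  have hu1 : β * τ < 1 := by
    have h := mul_lt_mul_of_pos_left h1 hβ
    rwa [mul_one_div, div_self hβ.ne'] at h
  have hβτ : HasDerivAt (fun x : ℝ => β * x) β τ := by
    simpa using (hasDerivAt_id τ).const_mul β
  have hg := (hasDerivAt_g hu0 hu1).comp τ hβτ
  have heq : (fun x => β * x * arcosh (1 / (β * x))) =ᶠ[nhds τ]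
      ((fun x => x * (Real.log (1 + Real.sqrt (1 - x ^ 2)) - Real.log x)) ∘ fun x => β * x) := by
    filter_upwards [isOpen_Ioo.mem_nhds (show τ ∈ Ioo 0 (1/β) from ⟨h0, h1⟩)] with x hx
    have hx0 : 0 < β * x := by have := hx.1; positivity
    have hx1 : β * x < 1 := by
      have h := mul_lt_mul_of_pos_left hx.2 hβ
      rwa [mul_one_div, div_self hβ.ne'] at h
    simp only [Function.comp]
    rw [arcosh_eq hx0 hx1]
  have := hg.congr_of_eventuallyEq heq
  refine this.congr_deriv ?_
  ring

/-- Let `σ(τ) = β·τ·arcosh(1/(βτ))` for `β > 0`.  If `t` inverts `σ` near `τ = 0`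
(i.e. `t (σ τ) = τ` for `τ ∈ (0, τ₀)` with `τ₀ ∈ (0, 1/β)`), then the derivative
`dτ/dσ = deriv t` tends to `0` as `σ → 0⁺`. -/
theorem inverse_derivative_vanishes (β : ℝ) (hβ : 0 < β) (τ₀ : ℝ)
    (hτ₀ : τ₀ ∈ Set.Ioo 0 (1 / β)) (t : ℝ → ℝ)
    (ht : ∀ τ ∈ Set.Ioo 0 τ₀, t (β * τ * arcosh (1 / (β * τ))) = τ) :
    Filter.Tendsto (deriv t) (nhdsWithin 0 (Set.Ioi 0)) (nhds 0) := by
  obtain ⟨hτ₀0, hτ₀1⟩ := hτ₀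
  set f : ℝ → ℝ := fun x => β * x * arcosh (1 / (β * x)) with hf_def
  set D : ℝ → ℝ := fun u => Real.log (1 + Real.sqrt (1 - u ^ 2)) - Real.log u
      - 1 / Real.sqrt (1 - u ^ 2) with hD_def
  -- basic parameters
  set τ₁ : ℝ := min τ₀ (1 / (10 * β)) with hτ₁def
  have hτ₁0 : 0 < τ₁ := lt_min hτ₀0 (by positivity)
  have hτ₁τ₀ : τ₁ ≤ τ₀ := min_le_left _ _
  have hτ₁u : β * τ₁ ≤ 1 / 10 := by
    have h := min_le_right τ₀ (1 / (10 * β))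
    have : β * τ₁ ≤ β * (1 / (10 * β)) := by nlinarith
    calc β * τ₁ ≤ β * (1 / (10 * β)) := this
    _ = 1 / 10 := by field_simp
  have hτ₁β : τ₁ < 1 / β := by
    have h1 : β * τ₁ < 1 := by linarith
    have := mul_lt_mul_of_pos_left h1 (show (0:ℝ) < 1/β by positivity)
    calc τ₁ = (1/β) * (β * τ₁) := by field_simp
    _ < (1/β) * 1 := this
    _ = 1/β := by ring
  set τ₂ : ℝ := τ₁ / 2 with hτ₂def
  have hτ₂0 : 0 < τ₂ := by positivity
  have hτ₂1 : τ₂ < τ₁ := by simp [hτ₂def]; linarith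
  -- the values of f rewritten through `g`
  have hβτlt : ∀ {x : ℝ}, 0 < x → x < 1/β → β * x < 1 := by
    intro x hx0 hx1
    have h := mul_lt_mul_of_pos_left hx1 hβ
    rwa [mul_one_div, div_self hβ.ne'] at h
  have hfg : ∀ {x : ℝ}, 0 < x → x < 1/β →
      f x = (β * x) * (Real.log (1 + Real.sqrt (1 - (β * x) ^ 2)) - Real.log (β * x)) := by
    intro x hx0 hx1
    have hu0 : 0 < β * x := by positivity
    simp only [hf_def]
    rw [arcosh_eq hu0 (hβτlt hx0 hx1)]
  -- positivity of f on (0, τ₁]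
  have hfpos : ∀ {x : ℝ}, 0 < x → x ≤ τ₁ → 2 * (β * x) ≤ f x := by
    intro x hx0 hx1
    rw [hfg hx0 (lt_of_le_of_lt hx1 hτ₁β)]
    exact g_lower (by positivity) (by nlinarith)
  -- strict monotonicity of f on (0, τ₁]
  have hDpos : ∀ {u : ℝ}, 0 < u → u ≤ 1/10 → 0 < D u := by
    intro u h0 h1
    have h2 := D_lower h0 h1
    have h3 : Real.log 10 ≤ Real.log (1/u) := by
      apply Real.log_le_log (by norm_num)
      rw [le_div_iff₀ h0]; linarith
    have := two_lt_log_ten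
    simp only [hD_def]; linarith
  have hderivf : ∀ {x : ℝ}, 0 < x → x < 1/β → HasDerivAt f (β * D (β * x)) x :=
    fun {x} h0 h1 => hasDerivAt_f β hβ h0 h1
  have hmono : StrictMonoOn f (Ioc 0 τ₁) := by
    apply strictMonoOn_of_deriv_pos (convex_Ioc 0 τ₁)
    · intro x hx
      exact (hderivf hx.1 (lt_of_le_of_lt hx.2 hτ₁β)).continuousAt.continuousWithinAt
    · intro x hx
      rw [interior_Ioc] at hx
      rw [(hderivf hx.1 (hx.2.trans hτ₁β)).deriv]
      have : 0 < D (β * x) := hDpos (mul_pos hβ hx.1)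
        (le_of_lt (lt_of_lt_of_le (mul_lt_mul_of_pos_left hx.2 hβ) hτ₁u))
      positivity
  -- f tends to 0 at 0⁺
  have hmemIoo : Ioo (0:ℝ) τ₂ ∈ nhdsWithin (0:ℝ) (Ioi 0) :=
    Ioo_mem_nhdsGT_of_mem ⟨le_refl 0, hτ₂0⟩
  have htendf : Tendsto f (nhdsWithin 0 (Ioi 0)) (nhds 0) := by
    have hbt : Tendsto (fun x : ℝ => β * x) (nhdsWithin 0 (Ioi 0)) (nhdsWithin 0 (Ioi 0)) := by
      rw [tendsto_nhdsWithin_iff]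
      constructor
      · have : Tendsto (fun x : ℝ => β * x) (nhds 0) (nhds 0) := by
          simpa using (continuous_mul_left β).tendsto (0:ℝ)
        exact this.mono_left nhdsWithin_le_nhds
      · filter_upwards [self_mem_nhdsWithin] with x hx
        exact mul_pos hβ hx
    have hlog : Tendsto (fun x : ℝ => Real.log x * x) (nhdsWithin 0 (Ioi 0)) (nhds 0) := by
      have := tendsto_log_mul_rpow_nhdsGT_zero zero_lt_one
      refine this.congr' ?_
      filter_upwards [self_mem_nhdsWithin] with x hx
      rw [Real.rpow_one]
    have hRHS : Tendsto (fun x : ℝ => (β * x) * Real.log 2 - Real.log (β * x) * (β * x))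
        (nhdsWithin 0 (Ioi 0)) (nhds 0) := by
      have h1 : Tendsto (fun x : ℝ => (β * x) * Real.log 2) (nhdsWithin 0 (Ioi 0)) (nhds 0) := by
        have := (hbt.mono_right nhdsWithin_le_nhds).mul_const (Real.log 2)
        simpa using this
      have h2 := hlog.comp hbt
      have := h1.sub h2
      simpa using this
    apply squeeze_zero' ?_ ?_ hRHS
    · filter_upwards [hmemIoo] with x hx
      have := hfpos hx.1 (le_of_lt (hx.2.trans hτ₂1))
      nlinarith [hx.1, hβ]
    · filter_upwards [hmemIoo] with x hx
      have hx1 : x < 1/β := (hx.2.trans hτ₂1).trans hτ₁β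
      rw [hfg hx.1 hx1]
      exact g_upper (mul_pos hβ hx.1) (hβτlt hx.1 hx1)
  -- the target interval
  set s : ℝ := f τ₂ with hs_def
  have hs0 : 0 < s := by
    have := hfpos hτ₂0 hτ₂1.le
    nlinarith
  -- every ρ ∈ (0, s) is attained
  have hexists : ∀ ρ ∈ Ioo 0 s, ∃ τ ∈ Ioo 0 τ₂, f τ = ρ := by
    intro ρ hρ
    have hev : ∀ᶠ x in nhdsWithin (0:ℝ) (Ioi 0), f x < ρ := htendf.eventually_lt_const hρ.1
    obtain ⟨a, hfa, ha⟩ := (hev.and hmemIoo).exists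
    have hcont : ContinuousOn f (Icc a τ₂) := by
      intro x hx
      have hx0 : 0 < x := lt_of_lt_of_le ha.1 hx.1
      have hx1 : x < 1/β := lt_of_le_of_lt hx.2 (hτ₂1.trans hτ₁β)
      exact (hderivf hx0 hx1).continuousAt.continuousWithinAt
    have hsub := intermediate_value_Ioo ha.2.le hcont
    have : ρ ∈ Ioo (f a) (f τ₂) := ⟨hfa, hρ.2⟩
    obtain ⟨τ, hτ, hfτ⟩ := hsub this
    exact ⟨τ, ⟨ha.1.trans hτ.1, hτ.2⟩, hfτ⟩
  -- t is the inverse of f on (0, s)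
  have htρ : ∀ ρ ∈ Ioo 0 s, t ρ ∈ Ioo 0 τ₂ ∧ f (t ρ) = ρ := by
    intro ρ hρ
    obtain ⟨τ, hτ, hfτ⟩ := hexists ρ hρ
    have h2 : t (f τ) = τ := ht τ ⟨hτ.1, lt_of_lt_of_le (hτ.2.trans hτ₂1) hτ₁τ₀⟩
    rw [hfτ] at h2
    rw [h2]
    exact ⟨hτ, hfτ⟩
  have hIocsub : Ioo (0:ℝ) τ₂ ⊆ Ioc 0 τ₁ := fun x hx => ⟨hx.1, (hx.2.trans hτ₂1).le⟩
  -- t is strictly monotone on (0, s)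
  have htmono : StrictMonoOn t (Ioo 0 s) := by
    intro x hx y hy hxy
    have hx' := htρ x hx
    have hy' := htρ y hy
    have : f (t x) < f (t y) := by rw [hx'.2, hy'.2]; exact hxy
    exact (hmono.lt_iff_lt (hIocsub hx'.1) (hIocsub hy'.1)).mp this
  -- image of t covers (0, τ₂)
  have himg : Ioo (0:ℝ) τ₂ ⊆ t '' (Ioo 0 s) := by
    intro τ hτ
    have hfτmem : f τ ∈ Ioo 0 s := by
      constructor
      · have := hfpos hτ.1 (hτ.2.trans hτ₂1).le
        nlinarith [hτ.1, hβ]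
      · exact hmono (hIocsub hτ) ⟨hτ₂0, hτ₂1.le⟩ hτ.2
    exact ⟨f τ, hfτmem, ht τ ⟨hτ.1, lt_of_lt_of_le (hτ.2.trans hτ₂1) hτ₁τ₀⟩⟩
  -- continuity and derivative of t
  have hderivt : ∀ ρ ∈ Ioo 0 s, HasDerivAt t (β * D (β * t ρ))⁻¹ ρ := by
    intro ρ hρ
    have htρ' := htρ ρ hρ
    have hcont : ContinuousAt t ρ :=
      htmono.continuousAt_of_image_mem_nhds (isOpen_Ioo.mem_nhds hρ)
        (Filter.mem_of_superset (isOpen_Ioo.mem_nhds htρ'.1) himg)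
    have h01 : 0 < t ρ := htρ'.1.1
    have h02 : t ρ < 1/β := (htρ'.1.2.trans hτ₂1).trans hτ₁β
    have hDne : (β * D (β * t ρ)) ≠ 0 := by
      have : 0 < D (β * t ρ) := hDpos (by positivity) (by nlinarith [htρ'.1.2])
      positivity
    apply HasDerivAt.of_local_left_inverse hcont (hderivf h01 h02) hDne
    filter_upwards [isOpen_Ioo.mem_nhds hρ] with y hy
    exact (htρ y hy).2
  -- the derivative bound and conclusion
  have hFtop : Tendsto (fun ρ => β * D (β * t ρ)) (nhdsWithin 0 (Ioi 0)) atTop := by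
    have hG : Tendsto (fun ρ : ℝ => β * (Real.log (2 / ρ) - 2)) (nhdsWithin 0 (Ioi 0)) atTop := by
      have h1 : Tendsto (fun ρ : ℝ => 2 / ρ) (nhdsWithin 0 (Ioi 0)) atTop := by
        have := tendsto_inv_nhdsGT_zero.const_mul_atTop (show (0:ℝ) < 2 by norm_num)
        simpa [div_eq_mul_inv] using this
      have h2 := Real.tendsto_log_atTop.comp h1
      have h3 := tendsto_atTop_add_const_right _ (-2 : ℝ) h2
      have h4 := h3.const_mul_atTop hβ
      refine h4.congr fun ρ => ?_
      simp only [Function.comp_apply]; ring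
    apply tendsto_atTop_mono' _ ?_ hG
    filter_upwards [Ioo_mem_nhdsGT_of_mem (show (0:ℝ) ∈ Ico 0 s from ⟨le_refl 0, hs0⟩)]
      with ρ hρ
    have htρ' := htρ ρ hρ
    set u := β * t ρ with hu_def
    have hu0 : 0 < u := by have := htρ'.1.1; positivity
    have hu1 : u ≤ 1/10 := by nlinarith [htρ'.1.2]
    have hub : u ≤ ρ / 2 := by
      have := hfpos htρ'.1.1 (htρ'.1.2.trans hτ₂1).le
      rw [htρ'.2] at this
      linarith
    have hlog1 : Real.log (2 / ρ) ≤ Real.log (1 / u) := by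
      apply Real.log_le_log (div_pos two_pos hρ.1)
      rw [div_le_div_iff₀ hρ.1 hu0]
      linarith
    have hD := D_lower hu0 hu1
    have : Real.log (2 / ρ) - 2 ≤ D u := by simp only [hD_def]; linarith
    nlinarith
  have hev : ∀ᶠ ρ in nhdsWithin (0:ℝ) (Ioi 0),
      (fun ρ => (β * D (β * t ρ))⁻¹) ρ = deriv t ρ := by
    filter_upwards [Ioo_mem_nhdsGT_of_mem (show (0:ℝ) ∈ Ico 0 s from ⟨le_refl 0, hs0⟩)]
      with ρ hρ
    exact ((hderivt ρ hρ).deriv).symm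
  exact (hFtop.inv_tendsto_atTop).congr' hev
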